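/- arXiv:1210.4367 — 2 statements merged into one kernel-verified Lean document; each statement's English description precedes it below -/
import Mathlib

section
/- Let G be a labeled graph and 𝓗 a multiset of standard components of G. Then 𝓗 can be extended to a standard decomposition of G if and only if G − Σ𝓗 (pointwise subtraction of label sums) is a standard graph. -/
/-- A labeled graph on node set `V` with edge set `E` is *standard* if all labels are
non-negative and labels are compatible with the edge relation. -/
def IsStandard {V : Type*} (E : Set (V × V)) (l : V → ℤ) : Prop :=
  (∀ v, 0 ≤ l v) ∧ ∀ e ∈ E, l e.1 ≤ l e.2

/-- A labeling is a *0-1 labeling* if every label is 0 or 1. -/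
def IsZeroOne {V : Type*} (l : V → ℤ) : Prop := ∀ v, l v = 0 ∨ l v = 1

/-- `H` is a *standard component* of `G` (same nodes and edges): `H` is a standard 0-1
graph, `G - H` is standard, and not all labels of `H` are zero. -/
def IsStdComp {V : Type*} (E : Set (V × V)) (G H : V → ℤ) : Prop :=
  IsStandard E H ∧ IsZeroOne H ∧ IsStandard E (G - H) ∧ ∃ v, H v ≠ 0

/-- A *standard decomposition* of `G`: a multiset of standard components of `G`
whose pointwise label sum equals the labeling of `G`. -/
def IsStdDecomp {V : Type*} (E : Set (V × V)) (G : V → ℤ) (D : Multiset (V → ℤ)) : Prop :=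
  (∀ H ∈ D, IsStdComp E G H) ∧ D.sum = G

lemma std_add {V : Type*} {E : Set (V × V)} {f g : V → ℤ}
    (hf : IsStandard E f) (hg : IsStandard E g) : IsStandard E (f + g) :=
  ⟨fun v => add_nonneg (hf.1 v) (hg.1 v), fun e he => add_le_add (hf.2 e he) (hg.2 e he)⟩

lemma std_sum {V : Type*} {E : Set (V × V)} (D : Multiset (V → ℤ))
    (h : ∀ f ∈ D, IsStandard E f) : IsStandard E D.sum := by
  induction D using Multiset.induction with
  | empty => exact ⟨fun v => le_refl 0, fun e _ => le_refl 0⟩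
  | cons a s ih =>
    rw [Multiset.sum_cons]
    exact std_add (h a (Multiset.mem_cons_self a s))
      (ih fun f hf => h f (Multiset.mem_cons_of_mem hf))

lemma decomp_aux {V : Type*} [Fintype V] (E : Set (V × V)) :
    ∀ N (G' : V → ℤ), (∑ v, (G' v).toNat) = N → IsStandard E G' →
    ∃ D : Multiset (V → ℤ), D.sum = G' ∧
      ∀ K ∈ D, IsStandard E K ∧ IsZeroOne K ∧ (∃ v, K v ≠ 0) ∧ IsStandard E (G' - K) := by
  intro N
  induction N using Nat.strong_induction_on with
  | _ N ih =>
    intro G' hN hG'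
    by_cases h0 : ∀ v, G' v = 0
    · refine ⟨0, ?_, by simp⟩
      simp only [Multiset.sum_zero]
      funext v; exact (h0 v).symm
    · push_neg at h0
      obtain ⟨v0, hv0⟩ := h0
      have hv0' : 1 ≤ G' v0 := by have := hG'.1 v0; omega
      set K₀ : V → ℤ := fun v => if 1 ≤ G' v then 1 else 0 with hK₀
      have hK₀std : IsStandard E K₀ := by
        constructor
        · intro v; simp only [hK₀]; split <;> norm_num
        · intro e he
          have hle := hG'.2 e he
          simp only [hK₀]
          split
          · rw [if_pos (by omega)]
          · split <;> norm_num
      have hG'' : IsStandard E (G' - K₀) := by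
        constructor
        · intro v
          have := hG'.1 v
          simp only [Pi.sub_apply, hK₀]
          split <;> omega
        · intro e he
          have hle := hG'.2 e he
          have h1 := hG'.1 e.1
          have h2 := hG'.1 e.2
          simp only [Pi.sub_apply, hK₀]
          split
          · rw [if_pos (by omega)]; omega
          · split <;> omega
      have hlt : (∑ v, ((G' - K₀) v).toNat) < N := by
        rw [← hN]
        apply Finset.sum_lt_sum
        · intro i _
          have := hG'.1 i
          simp only [Pi.sub_apply, hK₀]
          split <;> omega
        · refine ⟨v0, Finset.mem_univ _, ?_⟩
          simp only [Pi.sub_apply, hK₀, if_pos hv0']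
          omega
      obtain ⟨D', hsum, hmem⟩ := ih _ hlt (G' - K₀) rfl hG''
      refine ⟨K₀ ::ₘ D', ?_, ?_⟩
      · rw [Multiset.sum_cons, hsum]; ring
      · intro K hK
        rcases Multiset.mem_cons.mp hK with rfl | hK
        · refine ⟨hK₀std, ?_, ⟨v0, ?_⟩, hG''⟩
          · intro v; simp only [hK₀]; split
            · right; rfl
            · left; rfl
          · simp only [hK₀, if_pos hv0']; norm_num
        · obtain ⟨h1, h2, h3, h4⟩ := hmem K hK
          have heq : G' - K = K₀ + ((G' - K₀) - K) := by ring
          rw [heq]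
          exact ⟨h1, h2, h3, std_add hK₀std h4⟩

/-- A multiset of standard components of `G` extends to a standard decomposition of `G`
iff `G - ΣH` is standard. -/
theorem extend_iff {V : Type*} [Fintype V] (E : Set (V × V)) (hE : ∀ v, (v, v) ∉ E)
    (G : V → ℤ) (H : Multiset (V → ℤ)) (hH : ∀ K ∈ H, IsStdComp E G K) :
    (∃ D : Multiset (V → ℤ), IsStdDecomp E G D ∧ H ≤ D) ↔
      IsStandard E (G - H.sum) := by
  constructor
  · rintro ⟨D, ⟨hcomp, hsum⟩, hle⟩
    obtain ⟨t, rfl⟩ := Multiset.le_iff_exists_add.mp hle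
    have : G - H.sum = t.sum := by
      rw [← hsum, Multiset.sum_add]; ring
    rw [this]
    exact std_sum t fun f hf => (hcomp f (Multiset.mem_add.mpr (Or.inr hf))).1
  · intro hstd
    obtain ⟨D', hsum, hmem⟩ := decomp_aux E _ (G - H.sum) rfl hstd
    have hHstd : IsStandard E H.sum := std_sum H fun f hf => (hH f hf).1
    refine ⟨H + D', ⟨?_, ?_⟩, Multiset.le_add_right _ _⟩
    · intro K hK
      rcases Multiset.mem_add.mp hK with hK | hK
      · exact hH K hK
      · obtain ⟨h1, h2, h3, h4⟩ := hmem K hK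
        have heq : G - K = H.sum + ((G - H.sum) - K) := by ring
        exact ⟨h1, h2, by rw [heq]; exact std_add hHstd h4, h3⟩
    · rw [Multiset.sum_add, hsum]; ring
end

section
/- Connect Four addition of finite standard sets in ℕ^d is associative and commutative, and the empty set is its neutral element. -/
/-!
Over each `g : Fin d → ℕ` the Connect Four sum stacks the two columns, so the height of
`S + T` is the sum of the heights and associativity and commutativity reduce to those of `+`
on `ℕ`. A standard set is a lower set, hence each of its columns is an initial segment of `ℕ`
and the set is recovered from its heights; this makes `∅` neutral.
-/

open Pointwise

/-- A *standard set* in `ℕ^n`: a finite set whose complement `C` satisfies `C + ℕ^n = C`. -/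
def IsStdSet {n : ℕ} (S : Set (Fin n → ℕ)) : Prop :=
  S.Finite ∧ Sᶜ + (Set.univ : Set (Fin n → ℕ)) = Sᶜ

/-- Projection `ℕ^{d+1} → ℕ^d` to the first `d` coordinates. -/
def proj {d : ℕ} (b : Fin (d + 1) → ℕ) : Fin d → ℕ := fun i => b i.castSucc

/-- The *height* of `S ⊆ ℕ^{d+1}` over `γ ∈ ℕ^d`: the cardinality of the fiber of the
projection over `γ`. -/
noncomputable def height {d : ℕ} (S : Set (Fin (d + 1) → ℕ)) (g : Fin d → ℕ) : ℕ :=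
  {b ∈ S | proj b = g}.ncard

/-- The *Connect Four sum* of two subsets of `ℕ^{d+1}`. -/
def C4sum {d : ℕ} (S T : Set (Fin (d + 1) → ℕ)) : Set (Fin (d + 1) → ℕ) :=
  {b | b (Fin.last d) < height S (proj b) + height T (proj b)}

open Set

lemma IsStdSet.isLowerSet {n : ℕ} {S : Set (Fin n → ℕ)} (hS : IsStdSet S) : IsLowerSet S := by
  intro c b hbc hc
  by_contra hb
  have hmem : b + (c - b) ∈ Sᶜ := hS.2 ▸ add_mem_add hb (mem_univ _)
  rw [add_tsub_cancel_of_le hbc] at hmem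
  exact hmem hc

lemma IsLowerSet.eq_Iio_ncard {A : Set ℕ} (hA : IsLowerSet A) (hfin : A.Finite) :
    A = Iio A.ncard := by
  obtain rfl | ⟨a, rfl⟩ := hA.eq_univ_or_Iio
  · exact absurd hfin infinite_univ
  · rw [ncard_Iio_nat]

def column {d : ℕ} (S : Set (Fin (d + 1) → ℕ)) (g : Fin d → ℕ) : Set ℕ :=
  {k | (Fin.snoc g k : Fin (d + 1) → ℕ) ∈ S}

lemma proj_snoc {d : ℕ} (g : Fin d → ℕ) (k : ℕ) : proj (Fin.snoc g k : Fin (d + 1) → ℕ) = g := by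
  funext i; simp [proj]

lemma snoc_proj {d : ℕ} (b : Fin (d + 1) → ℕ) : Fin.snoc (proj b) (b (Fin.last d)) = b :=
  Fin.snoc_init_self b

lemma mem_iff_mem_column {d : ℕ} (S : Set (Fin (d + 1) → ℕ)) (b : Fin (d + 1) → ℕ) :
    b ∈ S ↔ b (Fin.last d) ∈ column S (proj b) := by
  change _ ↔ Fin.snoc (proj b) (b (Fin.last d)) ∈ S
  rw [snoc_proj]

lemma snoc_right_injective {d : ℕ} (g : Fin d → ℕ) :
    Function.Injective (fun k : ℕ => (Fin.snoc g k : Fin (d + 1) → ℕ)) :=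
  Fin.snoc_right_injective (α := fun _ => ℕ) g

lemma snoc_right_monotone {d : ℕ} (g : Fin d → ℕ) :
    Monotone (fun k : ℕ => (Fin.snoc g k : Fin (d + 1) → ℕ)) := fun j k hjk i =>
  Fin.lastCases (by simpa) (fun i => by simp) i

lemma height_eq_ncard_column {d : ℕ} (S : Set (Fin (d + 1) → ℕ)) (g : Fin d → ℕ) :
    height S g = (column S g).ncard := by
  have hfiber : {b ∈ S | proj b = g} =
      (fun k : ℕ => (Fin.snoc g k : Fin (d + 1) → ℕ)) '' column S g := by
    ext b
    constructor
    · rintro ⟨hb, rfl⟩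
      exact ⟨b (Fin.last d), (mem_iff_mem_column S b).1 hb, snoc_proj b⟩
    · rintro ⟨k, hk, rfl⟩
      exact ⟨hk, proj_snoc g k⟩
  rw [height, hfiber, ncard_image_of_injective _ (snoc_right_injective g)]

lemma column_c4sum {d : ℕ} (S T : Set (Fin (d + 1) → ℕ)) (g : Fin d → ℕ) :
    column (C4sum S T) g = Iio (height S g + height T g) := by
  ext k
  simp [column, C4sum, proj_snoc]

lemma height_c4sum {d : ℕ} (S T : Set (Fin (d + 1) → ℕ)) (g : Fin d → ℕ) :
    height (C4sum S T) g = height S g + height T g := by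
  rw [height_eq_ncard_column, column_c4sum, ncard_Iio_nat]

lemma IsStdSet.column_eq_Iio {d : ℕ} {S : Set (Fin (d + 1) → ℕ)} (hS : IsStdSet S)
    (g : Fin d → ℕ) : column S g = Iio (height S g) := by
  have hlower : IsLowerSet (column S g) := hS.isLowerSet.preimage (snoc_right_monotone g)
  have hfin : (column S g).Finite := hS.1.preimage (snoc_right_injective g).injOn
  rw [height_eq_ncard_column]
  exact hlower.eq_Iio_ncard hfin

lemma IsStdSet.mem_iff_lt_height {d : ℕ} {S : Set (Fin (d + 1) → ℕ)} (hS : IsStdSet S)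
    (b : Fin (d + 1) → ℕ) : b ∈ S ↔ b (Fin.last d) < height S (proj b) := by
  rw [mem_iff_mem_column, hS.column_eq_Iio, mem_Iio]

lemma c4sum_comm {d : ℕ} (S T : Set (Fin (d + 1) → ℕ)) : C4sum S T = C4sum T S := by
  simp only [C4sum, add_comm]

lemma c4sum_assoc {d : ℕ} (S T U : Set (Fin (d + 1) → ℕ)) :
    C4sum (C4sum S T) U = C4sum S (C4sum T U) := by
  ext b
  change _ < height (C4sum S T) _ + _ ↔ _ < _ + height (C4sum T U) _
  rw [height_c4sum, height_c4sum, add_assoc]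

lemma IsStdSet.c4sum_empty {d : ℕ} {S : Set (Fin (d + 1) → ℕ)} (hS : IsStdSet S) :
    C4sum S ∅ = S := by
  ext b
  simp [C4sum, height, hS.mem_iff_lt_height b]

/-- Connect Four addition of finite standard sets is associative and commutative, and
the empty set is its neutral element. -/
theorem c4sum_assoc_comm_neutral {d : ℕ} :
    (∀ S T U : Set (Fin (d + 1) → ℕ), IsStdSet S → IsStdSet T → IsStdSet U →
      C4sum (C4sum S T) U = C4sum S (C4sum T U)) ∧
    (∀ S T : Set (Fin (d + 1) → ℕ), IsStdSet S → IsStdSet T →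
      C4sum S T = C4sum T S) ∧
    (∀ S : Set (Fin (d + 1) → ℕ), IsStdSet S →
      C4sum S ∅ = S ∧ C4sum ∅ S = S) :=
  ⟨fun S T U _ _ _ => c4sum_assoc S T U, fun S T _ _ => c4sum_comm S T,
    fun _ hS => ⟨hS.c4sum_empty, c4sum_comm _ _ ▸ hS.c4sum_empty⟩⟩
end
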